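/- arXiv:1612.00142 — 5 statements merged into one kernel-verified Lean document; each statement's English description precedes it below -/
import Mathlib

section
/- Let Q0 := {x ∈ ℝⁿ : g_j(x) ≤ 0 for all j = 1,…,m}, let x⁰ ∈ Q0 and u ∈ ℝⁿ. Suppose that for each i ∈ {1,…,l} there exists vⁱ ∈ ℝⁿ such that ⟨∇f_i(x⁰), vⁱ⟩ + f_i°°(x⁰; u, u) < 0 and ⟨∇g_j(x⁰), vⁱ⟩ + g_j°°(x⁰; u, u) < 0 for all j ∈ J(x⁰; u). Then the generalized Abadie second-order regularity condition holds at x⁰ for the direction u, i.e. L²(Q; x⁰, u) ⊆ ∩_{i=1}^l T²(Mⁱ; x⁰, u). -/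
open Filter Topology Set
open scoped InnerProductSpace

noncomputable section

/-- A function is `C^{1,1}` iff it is Fréchet differentiable with locally Lipschitz
gradient. -/
def IsC11 {n : ℕ} (φ : EuclideanSpace ℝ (Fin n) → ℝ) : Prop :=
  Differentiable ℝ φ ∧ LocallyLipschitz (gradient φ)

/-- `φ°°(x⁰; u, u) = limsup_{x → x⁰, t ↓ 0} (⟨∇φ(x + t u), u⟩ − ⟨∇φ(x), u⟩)/t`. -/
def secondDD {n : ℕ} (φ : EuclideanSpace ℝ (Fin n) → ℝ)
    (x0 u : EuclideanSpace ℝ (Fin n)) : ℝ :=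
  Filter.limsup
    (fun p : EuclideanSpace ℝ (Fin n) × ℝ =>
      (⟪gradient φ (p.1 + p.2 • u), u⟫_ℝ - ⟪gradient φ p.1, u⟫_ℝ) / p.2)
    ((𝓝 x0) ×ˢ (𝓝[>] (0 : ℝ)))

/-- The second-order tangent set `T²(C; x⁰, u)`. -/
def tcone2 {n : ℕ} (C : Set (EuclideanSpace ℝ (Fin n)))
    (x0 u : EuclideanSpace ℝ (Fin n)) : Set (EuclideanSpace ℝ (Fin n)) :=
  {v | ∃ t : ℕ → ℝ, ∃ vk : ℕ → EuclideanSpace ℝ (Fin n),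
    (∀ k, 0 < t k) ∧ Tendsto t atTop (𝓝 0) ∧ Tendsto vk atTop (𝓝 v) ∧
    ∀ k, x0 + t k • u + ((1 / 2) * (t k) ^ 2) • vk k ∈ C}

/-- `(a₁, a₂) ≦_lex (0, 0)`. -/
def lexLE (a : ℝ × ℝ) : Prop := a.1 < 0 ∨ (a.1 = 0 ∧ a.2 ≤ 0)

/-- The second-order linearizing set `L²(Q; x⁰, u)`. -/
def L2lin {n l m : ℕ} (f : Fin l → EuclideanSpace ℝ (Fin n) → ℝ)
    (g : Fin m → EuclideanSpace ℝ (Fin n) → ℝ)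
    (x0 u : EuclideanSpace ℝ (Fin n)) : Set (EuclideanSpace ℝ (Fin n)) :=
  {v | (∀ i, lexLE (⟪gradient (f i) x0, u⟫_ℝ,
          ⟪gradient (f i) x0, v⟫_ℝ + secondDD (f i) x0 u)) ∧
       (∀ j, g j x0 = 0 → lexLE (⟪gradient (g j) x0, u⟫_ℝ,
          ⟪gradient (g j) x0, v⟫_ℝ + secondDD (g j) x0 u))}

/-!
For a `C^{1,1}` function `φ` and directions `u`, `w`, for every `ε > 0` and all small `t > 0`,
`φ (x⁰ + t u + (t²/2) w) ≤ φ x⁰ + t ⟪∇φ x⁰, u⟫ + (t²/2) (⟪∇φ x⁰, w⟫ + φ°°(x⁰; u, u) + ε)`: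
along the line `x⁰ + t u` this is the limsup defining `φ°°` integrated once, and the extra
displacement `(t²/2) w` costs `(t²/2) ⟪∇φ x⁰, w⟫ + o(t²)` by strict differentiability.
So the curve stays in `{φ ≤ φ x⁰}` as soon as `(⟪∇φ x⁰, u⟫, ⟪∇φ x⁰, w⟫ + φ°°(x⁰; u, u))` is
strictly lexicographically negative. For `v ∈ L²(Q; x⁰, u)` the directions
`w_k = (1 - ε_k) v + ε_k vⁱ`, `ε_k ↓ 0`, have this property for `f_i` and every active `g_j`,
while inactive constraints stay inactive by continuity; since `w_k → v`, this puts `v` in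
`T²(Mⁱ; x⁰, u)`.
-/

theorem le_add_mul_add_half_sq_of_hasDerivAt {F F' : ℝ → ℝ} {δ a c : ℝ}
    (hF : ∀ t, HasDerivAt F (F' t) t) (hF' : ∀ t ∈ Ico 0 δ, F' t ≤ a + t * c) :
    ∀ t ∈ Icc 0 δ, F t ≤ F 0 + t * a + (1 / 2) * t ^ 2 * c := by
  have hB (t : ℝ) : HasDerivAt (fun s => F 0 + s * a + (1 / 2) * s ^ 2 * c) (a + t * c) t :=
    ((((hasDerivAt_id' t).mul_const a).const_add (F 0)).add
      (((hasDerivAt_pow 2 t).const_mul (1 / 2)).mul_const c)).congr_deriv (by push_cast; ring)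
  exact image_le_of_deriv_right_le_deriv_boundary
    (fun t _ => (hF t).continuousAt.continuousWithinAt) (fun t _ => (hF t).hasDerivWithinAt)
    (by simp) (fun t _ => (hB t).continuousAt.continuousWithinAt)
    (fun t _ => (hB t).hasDerivWithinAt) hF'

def lexLT (a : ℝ × ℝ) : Prop := a.1 < 0 ∨ (a.1 = 0 ∧ a.2 < 0)

theorem lexLT_one_sub_mul_add_mul {a b c ε : ℝ} (hab : lexLE (a, b)) (hc : a = 0 → c < 0)
    (hε : 0 < ε) (hε1 : ε ≤ 1) : lexLT (a, (1 - ε) * b + ε * c) := by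
  rcases hab with ha | ⟨ha, hb⟩
  · exact Or.inl ha
  · exact Or.inr ⟨ha, by nlinarith [hc ha]⟩

theorem eventually_le_of_lexLT_of_forall_pos {F : ℝ → ℝ} {y a c : ℝ}
    (hF : ∀ ε, 0 < ε → ∀ᶠ t in 𝓝[>] (0 : ℝ), F t ≤ y + t * a + (1 / 2) * t ^ 2 * (c + ε))
    (h : lexLT (a, c)) : ∀ᶠ t in 𝓝[>] (0 : ℝ), F t ≤ y := by
  rcases h with ha | ⟨ha, hc⟩
  · have hsmall : ∀ᶠ t in 𝓝[>] (0 : ℝ), a + (1 / 2) * t * (c + 1) < 0 := by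
      have : Tendsto (fun t : ℝ => a + (1 / 2) * t * (c + 1)) (𝓝 0) (𝓝 a) :=
        (by fun_prop : Continuous fun t : ℝ => a + (1 / 2) * t * (c + 1)).tendsto' 0 a (by simp)
      exact (this.eventually (gt_mem_nhds ha)).filter_mono nhdsWithin_le_nhds
    filter_upwards [hF 1 one_pos, hsmall, self_mem_nhdsWithin] with t h1 h2 (ht : 0 < t)
    nlinarith [mul_neg_of_pos_of_neg ht h2]
  · filter_upwards [hF (-c) (neg_pos.2 hc)] with t h1
    simpa [show a = 0 from ha] using h1

section InnerProductSpace

variable {E : Type*} [NormedAddCommGroup E] [InnerProductSpace ℝ E]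

theorem HasStrictFDerivAt.eventually_le_add_half_sq_smul {φ : E → ℝ} {φ' : E →L[ℝ] ℝ} {x : E}
    (hφ : HasStrictFDerivAt φ φ' x) (u w : E) {ε : ℝ} (hε : 0 < ε) :
    ∀ᶠ t in 𝓝 (0 : ℝ),
      φ (x + t • u + ((1 / 2) * t ^ 2) • w) ≤ φ (x + t • u) + (1 / 2) * t ^ 2 * (φ' w + ε) := by
  have hpair : Tendsto (fun t : ℝ => (x + t • u + ((1 / 2) * t ^ 2) • w, x + t • u)) (𝓝 0)
      (𝓝 (x, x)) := by
    have : Continuous (fun t : ℝ => (x + t • u + ((1 / 2) * t ^ 2) • w, x + t • u)) := by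
      fun_prop
    simpa using this.tendsto 0
  have hc : 0 < ε / (‖w‖ + 1) := by positivity
  filter_upwards [((hasStrictFDerivAt_iff_isLittleO.1 hφ).comp_tendsto hpair).def hc] with t ht
  have hh : (0 : ℝ) ≤ 1 / 2 * t ^ 2 := by positivity
  have hstep : x + t • u + ((1 / 2) * t ^ 2) • w - (x + t • u) = ((1 / 2) * t ^ 2) • w := by
    abel
  simp only [Function.comp_apply, hstep, map_smul, smul_eq_mul, norm_smul, Real.norm_eq_abs,
    abs_of_nonneg hh] at ht
  have hw : ε / (‖w‖ + 1) * ‖w‖ ≤ ε := by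
    rw [div_mul_eq_mul_div, div_le_iff₀ (by positivity)]
    nlinarith [norm_nonneg w]
  nlinarith [le_abs_self (φ (x + t • u + ((1 / 2) * t ^ 2) • w) - φ (x + t • u)
    - 1 / 2 * t ^ 2 * φ' w), mul_le_mul_of_nonneg_left hw hh]

variable [CompleteSpace E]

theorem hasDerivAt_comp_add_smul {φ : E → ℝ} {x u : E} {t : ℝ}
    (hφ : DifferentiableAt ℝ φ (x + t • u)) :
    HasDerivAt (fun s : ℝ => φ (x + s • u)) ⟪gradient φ (x + t • u), u⟫_ℝ t := by
  rw [inner_gradient_left]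
  exact hφ.hasFDerivAt.comp_hasDerivAt t
    (by simpa using ((hasDerivAt_id t).smul_const u).const_add x)

theorem isBoundedUnder_le_inner_gradient_slope {φ : E → ℝ} (hφ : LocallyLipschitz (gradient φ))
    (x0 u : E) :
    IsBoundedUnder (· ≤ ·) ((𝓝 x0) ×ˢ (𝓝[>] (0 : ℝ)))
      (fun p : E × ℝ => (⟪gradient φ (p.1 + p.2 • u), u⟫_ℝ - ⟪gradient φ p.1, u⟫_ℝ) / p.2) := by
  obtain ⟨K, s, hs, hK⟩ := hφ x0
  have hle : (𝓝 x0) ×ˢ (𝓝[>] (0 : ℝ)) ≤ 𝓝 (x0, 0) := by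
    rw [nhds_prod_eq]; exact prod_mono le_rfl nhdsWithin_le_nhds
  have hshift : Tendsto (fun p : E × ℝ => p.1 + p.2 • u) ((𝓝 x0) ×ˢ (𝓝[>] (0 : ℝ))) (𝓝 x0) := by
    have : Continuous (fun p : E × ℝ => p.1 + p.2 • u) := by fun_prop
    simpa using (this.tendsto (x0, 0)).mono_left hle
  refine ⟨K * ‖u‖ ^ 2, eventually_map.2 ?_⟩
  filter_upwards [tendsto_fst.eventually hs, hshift.eventually hs,
    tendsto_snd.eventually self_mem_nhdsWithin] with p hp1 hp2 (hp : 0 < p.2)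
  rw [div_le_iff₀ hp, ← inner_sub_left]
  calc ⟪gradient φ (p.1 + p.2 • u) - gradient φ p.1, u⟫_ℝ
      ≤ ‖gradient φ (p.1 + p.2 • u) - gradient φ p.1‖ * ‖u‖ := real_inner_le_norm _ _
    _ ≤ K * ‖p.2 • u‖ * ‖u‖ := by
        gcongr
        simpa [dist_eq_norm] using hK.dist_le_mul _ hp2 _ hp1
    _ = K * ‖u‖ ^ 2 * p.2 := by
        rw [norm_smul, Real.norm_of_nonneg hp.le]; ring

theorem hasStrictFDerivAt_of_continuousAt_gradient {φ : E → ℝ} {x : E}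
    (hd : Differentiable ℝ φ) (hc : ContinuousAt (gradient φ) x) :
    HasStrictFDerivAt φ (fderiv ℝ φ x) x :=
  hasStrictFDerivAt_of_hasFDerivAt_of_continuousAt (.of_forall fun y => (hd y).hasFDerivAt)
    (by
      rw [← toDual_comp_gradient]
      exact (InnerProductSpace.toDual ℝ E).continuous.continuousAt.comp hc)

end InnerProductSpace

section EuclideanSpace

variable {n : ℕ} {φ : EuclideanSpace ℝ (Fin n) → ℝ} {x0 u w : EuclideanSpace ℝ (Fin n)}

theorem eventually_inner_gradient_add_smul_le (hφ : LocallyLipschitz (gradient φ)) {ε : ℝ}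
    (hε : 0 < ε) :
    ∀ᶠ t in 𝓝[>] (0 : ℝ),
      ⟪gradient φ (x0 + t • u), u⟫_ℝ ≤ ⟪gradient φ x0, u⟫_ℝ + t * (secondDD φ x0 u + ε) := by
  have hlt := eventually_lt_of_limsup_lt (lt_add_of_pos_right (secondDD φ x0 u) hε)
    (isBoundedUnder_le_inner_gradient_slope hφ x0 u)
  filter_upwards [(tendsto_const_nhds.prodMk tendsto_id).eventually hlt, self_mem_nhdsWithin]
    with t ht (htpos : 0 < t)
  have := (div_lt_iff₀ htpos).1 ht
  simp only [id] at this
  linarith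

theorem eventually_le_add_smul (hφ : IsC11 φ) {ε : ℝ} (hε : 0 < ε) :
    ∀ᶠ t in 𝓝[>] (0 : ℝ), φ (x0 + t • u) ≤
      φ x0 + t * ⟪gradient φ x0, u⟫_ℝ + (1 / 2) * t ^ 2 * (secondDD φ x0 u + ε) := by
  obtain ⟨δ, hδ, hsub⟩ :=
    mem_nhdsGT_iff_exists_Ioo_subset.1 (eventually_inner_gradient_add_smul_le hφ.2 hε)
  have hbound : ∀ t ∈ Ico 0 δ,
      ⟪gradient φ (x0 + t • u), u⟫_ℝ ≤ ⟪gradient φ x0, u⟫_ℝ + t * (secondDD φ x0 u + ε) := by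
    rintro t ⟨ht0, htδ⟩
    rcases ht0.eq_or_lt with rfl | ht0
    · simp
    · exact hsub ⟨ht0, htδ⟩
  have htaylor := le_add_mul_add_half_sq_of_hasDerivAt
    (fun t => hasDerivAt_comp_add_smul (hφ.1 _)) hbound
  filter_upwards [Ioo_mem_nhdsGT hδ] with t ht
  simpa using htaylor t ⟨ht.1.le, ht.2.le⟩

theorem eventually_le_add_smul_add_half_sq_smul (hφ : IsC11 φ) {ε : ℝ} (hε : 0 < ε) :
    ∀ᶠ t in 𝓝[>] (0 : ℝ), φ (x0 + t • u + ((1 / 2) * t ^ 2) • w) ≤ φ x0 + t * ⟪gradient φ x0, u⟫_ℝ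
      + (1 / 2) * t ^ 2 * (⟪gradient φ x0, w⟫_ℝ + secondDD φ x0 u + ε) := by
  have hstrict : HasStrictFDerivAt φ (fderiv ℝ φ x0) x0 :=
    hasStrictFDerivAt_of_continuousAt_gradient hφ.1 hφ.2.continuous.continuousAt
  filter_upwards [eventually_le_add_smul (x0 := x0) (u := u) hφ (half_pos hε),
    nhdsWithin_le_nhds (hstrict.eventually_le_add_half_sq_smul u w (half_pos hε))] with t h1 h2
  rw [← inner_gradient_left] at h2
  linarith

theorem eventually_le_of_lexLT (hφ : IsC11 φ)
    (h : lexLT (⟪gradient φ x0, u⟫_ℝ, ⟪gradient φ x0, w⟫_ℝ + secondDD φ x0 u)) :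
    ∀ᶠ t in 𝓝[>] (0 : ℝ), φ (x0 + t • u + ((1 / 2) * t ^ 2) • w) ≤ φ x0 :=
  eventually_le_of_lexLT_of_forall_pos (fun _ => eventually_le_add_smul_add_half_sq_smul hφ) h

theorem eventually_nonpos_of_lexLT (hφ : IsC11 φ) (hx0 : φ x0 ≤ 0)
    (h : φ x0 = 0 → lexLT (⟪gradient φ x0, u⟫_ℝ, ⟪gradient φ x0, w⟫_ℝ + secondDD φ x0 u)) :
    ∀ᶠ t in 𝓝[>] (0 : ℝ), φ (x0 + t • u + ((1 / 2) * t ^ 2) • w) ≤ 0 := by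
  rcases hx0.eq_or_lt with h0 | h0
  · simpa [h0] using eventually_le_of_lexLT hφ (h h0)
  · have hcont : Tendsto (fun t : ℝ => φ (x0 + t • u + ((1 / 2) * t ^ 2) • w)) (𝓝 0)
        (𝓝 (φ x0)) := by
      have := hφ.1.continuous
      exact (by fun_prop : Continuous fun t : ℝ => φ (x0 + t • u + ((1 / 2) * t ^ 2) • w)).tendsto'
        0 (φ x0) (by simp)
    exact ((hcont.eventually (gt_mem_nhds h0)).filter_mono nhdsWithin_le_nhds).mono
      fun _ => le_of_lt

theorem mem_tcone2_of_tendsto {C : Set (EuclideanSpace ℝ (Fin n))} {v : EuclideanSpace ℝ (Fin n)}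
    {w : ℕ → EuclideanSpace ℝ (Fin n)} (hw : Tendsto w atTop (𝓝 v))
    (hC : ∀ k, ∀ᶠ t in 𝓝[>] (0 : ℝ), x0 + t • u + ((1 / 2) * t ^ 2) • w k ∈ C) :
    v ∈ tcone2 C x0 u := by
  have hexists (k : ℕ) : ∃ t : ℝ, (0 < t ∧ t < 1 / (k + 1)) ∧
      x0 + t • u + ((1 / 2) * t ^ 2) • w k ∈ C :=
    (Filter.Eventually.and (Ioo_mem_nhdsGT Nat.one_div_pos_of_nat) (hC k)).exists
  choose t ht htC using hexists
  exact ⟨t, w, fun k => (ht k).1, squeeze_zero (fun k => (ht k).1.le) (fun k => (ht k).2.le)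
    tendsto_one_div_add_atTop_nhds_zero_nat, hw, htC⟩

end EuclideanSpace

/-- Proposition 3.1: a sufficient condition for the generalized Abadie second-order
regularity condition `(GASORC)`. -/
theorem stmt_0 {n l m : ℕ}
    (f : Fin l → EuclideanSpace ℝ (Fin n) → ℝ)
    (g : Fin m → EuclideanSpace ℝ (Fin n) → ℝ)
    (hf : ∀ i, IsC11 (f i)) (hg : ∀ j, IsC11 (g j))
    (Q0 : Set (EuclideanSpace ℝ (Fin n)))
    (hQ0 : Q0 = {x | ∀ j, g j x ≤ 0})
    (x0 u : EuclideanSpace ℝ (Fin n)) (hx0 : x0 ∈ Q0)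
    (hsys : ∀ i : Fin l, ∃ v : EuclideanSpace ℝ (Fin n),
      ⟪gradient (f i) x0, v⟫_ℝ + secondDD (f i) x0 u < 0 ∧
      ∀ j : Fin m, g j x0 = 0 → ⟪gradient (g j) x0, u⟫_ℝ = 0 →
        ⟪gradient (g j) x0, v⟫_ℝ + secondDD (g j) x0 u < 0) :
    L2lin f g x0 u ⊆ ⋂ i : Fin l, tcone2 (Q0 ∩ {x | f i x ≤ f i x0}) x0 u := by
  subst hQ0
  rintro v ⟨hvf, hvg⟩
  refine mem_iInter.2 fun i => ?_
  obtain ⟨vi, hfi, hgi⟩ := hsys i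
  set ε : ℕ → ℝ := fun k => 1 / (k + 1)
  have hε : Tendsto ε atTop (𝓝 0) := tendsto_one_div_add_atTop_nhds_zero_nat
  have hw : Tendsto (fun k => (1 - ε k) • v + ε k • vi) atTop (𝓝 v) := by
    simpa using (((tendsto_const_nhds (x := (1 : ℝ))).sub hε).smul_const v).add (hε.smul_const vi)
  refine mem_tcone2_of_tendsto hw fun k => ?_
  have hε0 : 0 < ε k := Nat.one_div_pos_of_nat
  have hε1 : ε k ≤ 1 := Nat.one_div_le_one_div (Nat.zero_le k) |>.trans (by norm_num)
  have hsplit (y : EuclideanSpace ℝ (Fin n)) (c : ℝ) : ⟪y, (1 - ε k) • v + ε k • vi⟫_ℝ + c =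
      (1 - ε k) * (⟪y, v⟫_ℝ + c) + ε k * (⟪y, vi⟫_ℝ + c) := by
    rw [inner_add_right, real_inner_smul_right, real_inner_smul_right]; ring
  have hgk : ∀ᶠ t in 𝓝[>] (0 : ℝ), ∀ j,
      g j (x0 + t • u + ((1 / 2) * t ^ 2) • ((1 - ε k) • v + ε k • vi)) ≤ 0 :=
    eventually_all.2 fun j => eventually_nonpos_of_lexLT (hg j) (hx0 j) fun hj => by
      rw [hsplit]; exact lexLT_one_sub_mul_add_mul (hvg j hj) (hgi j hj) hε0 hε1
  have hfk := eventually_le_of_lexLT (x0 := x0) (u := u) (hf i) (by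
    rw [hsplit]; exact lexLT_one_sub_mul_add_mul (hvf i) (fun _ => hfi) hε0 hε1)
  filter_upwards [hgk, hfk] with t hgt hft
  exact ⟨hgt, hft⟩
end
end

section
/- Let Q0 := {x ∈ ℝⁿ : g_j(x) ≤ 0 for all j = 1,…,m} and x⁰ ∈ Q0. If x⁰ is a Geoffrion properly efficient solution of the problem of minimizing f = (f₁,…,f_l) over Q0, and the generalized Abadie first-order regularity condition L(Q; x⁰) ⊆ ∩_{i=1}^l T(Mⁱ; x⁰) holds at x⁰, then there is no u ∈ ℝⁿ satisfying: ⟨∇f_i(x⁰), u⟩ ≤ 0 for all i = 1,…,l, ⟨∇f_i(x⁰), u⟩ < 0 for at least one i, and ⟨∇g_j(x⁰), u⟩ ≤ 0 for all j ∈ J(x⁰). -/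
open Filter Topology Set
open scoped InnerProductSpace

noncomputable section

/-- The (first-order) tangent cone `T(C; x⁰)`. -/
def tcone {n : ℕ} (C : Set (EuclideanSpace ℝ (Fin n)))
    (x0 : EuclideanSpace ℝ (Fin n)) : Set (EuclideanSpace ℝ (Fin n)) :=
  {d | ∃ t : ℕ → ℝ, ∃ dk : ℕ → EuclideanSpace ℝ (Fin n),
    (∀ k, 0 < t k) ∧ Tendsto t atTop (𝓝 0) ∧ Tendsto dk atTop (𝓝 d) ∧
    ∀ k, x0 + t k • dk k ∈ C}

/-- `x0` is a Geoffrion properly efficient solution of the problem of minimizing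
the family `f` over `Q0`. -/
def Geoffrion {n l : ℕ} (Q0 : Set (EuclideanSpace ℝ (Fin n)))
    (f : Fin l → EuclideanSpace ℝ (Fin n) → ℝ)
    (x0 : EuclideanSpace ℝ (Fin n)) : Prop :=
  x0 ∈ Q0 ∧
  (¬ ∃ x ∈ Q0, (∀ i, f i x ≤ f i x0) ∧ ∃ k, f k x < f k x0) ∧
  ∃ M > (0 : ℝ), ∀ i, ∀ x ∈ Q0, f i x < f i x0 →
    ∃ j, f j x0 < f j x ∧ (f i x0 - f i x) / (f j x - f j x0) ≤ M

/-!
Take `u` in the linearizing cone with `⟪∇f_{i₀}(x⁰), u⟫ < 0`. By the regularity condition `u` is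
tangent to `Q0` along points `x_k = x⁰ + t_k d_k`, and the difference quotients
`(f_i(x_k) - f_i(x⁰)) / t_k` tend to `⟪∇f_i(x⁰), u⟫ ≤ 0`. Eventually `f_{i₀}` decreases strictly
along `x_k`, so Geoffrion's bound gives, for each `k`, some `j` with
`-(f_{i₀}(x_k) - f_{i₀}(x⁰)) / t_k ≤ M (f_j(x_k) - f_j(x⁰)) / t_k`. Some `j` occurs infinitely
often, and in the limit `0 < -⟪∇f_{i₀}(x⁰), u⟫ ≤ M ⟪∇f_j(x⁰), u⟫ ≤ 0`.
-/

theorem tendsto_slope_of_tendsto {E : Type*} [NormedAddCommGroup E] [InnerProductSpace ℝ E]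
    [CompleteSpace E] {φ : E → ℝ} {x u : E} (hφ : DifferentiableAt ℝ φ x)
    {t : ℕ → ℝ} {d : ℕ → E} (ht : ∀ k, t k ≠ 0) (ht0 : Tendsto t atTop (𝓝 0))
    (hd : Tendsto d atTop (𝓝 u)) :
    Tendsto (fun k => (φ (x + t k • d k) - φ x) / t k) atTop (𝓝 ⟪gradient φ x, u⟫_ℝ) := by
  have hstep : Tendsto (fun k => t k • d k) atTop (𝓝 0) := by
    simpa using ht0.smul hd
  have hrescale : (fun k => (t k)⁻¹ • t k • d k) = d := by
    ext1 k
    rw [inv_smul_smul₀ (ht k)]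
  have := hφ.hasGradientAt.hasFDerivAt.hasFDerivWithinAt.lim hstep
    (.of_forall fun _ => mem_univ _) (hrescale ▸ hd)
  simpa only [smul_eq_mul, inv_mul_eq_div, InnerProductSpace.toDual_apply_apply] using this

theorem exists_le_of_eventually_exists_le {ι : Type*} [Finite ι] {a : ℕ → ℝ} {b : ι → ℕ → ℝ}
    {A : ℝ} {B : ι → ℝ} (ha : Tendsto a atTop (𝓝 A)) (hb : ∀ i, Tendsto (b i) atTop (𝓝 (B i)))
    (h : ∀ᶠ k in atTop, ∃ i, a k ≤ b i k) : ∃ i, A ≤ B i := by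
  by_contra! hlt
  have hall : ∀ᶠ k in atTop, ∀ i, b i k < a k :=
    eventually_all.2 fun i => (hb i).eventually_lt ha (hlt i)
  obtain ⟨k, ⟨i, hi⟩, hk⟩ := (h.and hall).exists
  exact (hk i).not_ge hi

theorem Geoffrion.exists_tradeoff_le {n l : ℕ} {Q0 : Set (EuclideanSpace ℝ (Fin n))}
    {f : Fin l → EuclideanSpace ℝ (Fin n) → ℝ} {x0 : EuclideanSpace ℝ (Fin n)}
    (h : Geoffrion Q0 f x0) :
    ∃ M > (0 : ℝ), ∀ i, ∀ x ∈ Q0, f i x < f i x0 →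
      ∃ j, f i x0 - f i x ≤ M * (f j x - f j x0) := by
  obtain ⟨-, -, M, hM, hbound⟩ := h
  refine ⟨M, hM, fun i x hx hlt => ?_⟩
  obtain ⟨j, hj, hratio⟩ := hbound i x hx hlt
  exact ⟨j, (div_le_iff₀ (sub_pos.2 hj)).1 hratio⟩

theorem stmt_2_general {n l m : ℕ}
    (f : Fin l → EuclideanSpace ℝ (Fin n) → ℝ)
    (g : Fin m → EuclideanSpace ℝ (Fin n) → ℝ)
    (hf : ∀ i, IsC11 (f i))
    (Q0 : Set (EuclideanSpace ℝ (Fin n)))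
    (x0 : EuclideanSpace ℝ (Fin n))
    (hgeof : Geoffrion Q0 f x0)
    (hreg : {u : EuclideanSpace ℝ (Fin n) |
        (∀ i, ⟪gradient (f i) x0, u⟫_ℝ ≤ 0) ∧
        (∀ j, g j x0 = 0 → ⟪gradient (g j) x0, u⟫_ℝ ≤ 0)} ⊆
      ⋂ i : Fin l, tcone (Q0 ∩ {x | f i x ≤ f i x0}) x0) :
    ¬ ∃ u : EuclideanSpace ℝ (Fin n),
      (∀ i, ⟪gradient (f i) x0, u⟫_ℝ ≤ 0) ∧
      (∃ i, ⟪gradient (f i) x0, u⟫_ℝ < 0) ∧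
      (∀ j, g j x0 = 0 → ⟪gradient (g j) x0, u⟫_ℝ ≤ 0) := by
  rintro ⟨u, hfu, ⟨i0, hi0⟩, hgu⟩
  obtain ⟨M, hM, htradeoff⟩ := hgeof.exists_tradeoff_le
  obtain ⟨t, d, ht, ht0, hd, hmem⟩ := mem_iInter.1 (hreg ⟨hfu, hgu⟩) i0
  set q : Fin l → ℕ → ℝ := fun i k => (f i (x0 + t k • d k) - f i x0) / t k
  have hq (i : Fin l) : Tendsto (q i) atTop (𝓝 ⟪gradient (f i) x0, u⟫_ℝ) :=
    tendsto_slope_of_tendsto ((hf i).1 x0) (fun k => (ht k).ne') ht0 hd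
  have hdescent : ∀ᶠ k in atTop, f i0 (x0 + t k • d k) < f i0 x0 := by
    filter_upwards [(hq i0).eventually_lt_const hi0] with k hk
    by_contra! hge
    exact hk.not_ge (div_nonneg (sub_nonneg.2 hge) (ht k).le)
  have htradeoff_q : ∀ᶠ k in atTop, ∃ j, -q i0 k ≤ M * q j k := by
    filter_upwards [hdescent] with k hk
    obtain ⟨j, hj⟩ := htradeoff i0 _ (hmem k).1 hk
    refine ⟨j, ?_⟩
    simp only [q, ← neg_div, neg_sub, ← mul_div_assoc]
    exact div_le_div_of_nonneg_right hj (ht k).le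
  obtain ⟨j, hj⟩ := exists_le_of_eventually_exists_le (hq i0).neg
    (fun j => (hq j).const_mul M) htradeoff_q
  nlinarith [hfu j]

/-- Theorem 4.1: first-order necessary optimality condition under the generalized
Abadie first-order regularity condition `(GAFORC)`. -/
theorem stmt_2 {n l m : ℕ}
    (f : Fin l → EuclideanSpace ℝ (Fin n) → ℝ)
    (g : Fin m → EuclideanSpace ℝ (Fin n) → ℝ)
    (hf : ∀ i, IsC11 (f i)) (hg : ∀ j, IsC11 (g j))
    (Q0 : Set (EuclideanSpace ℝ (Fin n)))
    (hQ0 : Q0 = {x | ∀ j, g j x ≤ 0})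
    (x0 : EuclideanSpace ℝ (Fin n))
    (hgeof : Geoffrion Q0 f x0)
    (hreg : {u : EuclideanSpace ℝ (Fin n) |
        (∀ i, ⟪gradient (f i) x0, u⟫_ℝ ≤ 0) ∧
        (∀ j, g j x0 = 0 → ⟪gradient (g j) x0, u⟫_ℝ ≤ 0)} ⊆
      ⋂ i : Fin l, tcone (Q0 ∩ {x | f i x ≤ f i x0}) x0) :
    ¬ ∃ u : EuclideanSpace ℝ (Fin n),
      (∀ i, ⟪gradient (f i) x0, u⟫_ℝ ≤ 0) ∧
      (∃ i, ⟪gradient (f i) x0, u⟫_ℝ < 0) ∧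
      (∀ j, g j x0 = 0 → ⟪gradient (g j) x0, u⟫_ℝ ≤ 0) :=
  stmt_2_general f g hf Q0 x0 hgeof hreg
end
end

section
/- Let f₁(x) := x₂, f₂(x) := x₁ + x₂², f₃(x) := −x₁ − x₁|x₁| + x₂² for x = (x₁, x₂) ∈ ℝ². Then x⁰ := (0,0) is NOT a Geoffrion properly efficient solution of the problem of minimizing f = (f₁, f₂, f₃) over ℝ²: for every M > 0 there exists x ∈ ℝ² with f₁(x) < f₁(x⁰) such that for every j with f_j(x) > f_j(x⁰) one has (f₁(x⁰) − f₁(x))/(f_j(x) − f_j(x⁰)) > M. (Indeed, the points x = (0, −a) with a ↓ 0 satisfy f₁(x) = −a < 0, f₂(x) = f₃(x) = a² > 0, and the ratio 1/a tends to +∞.) -/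
open Filter Topology Set

noncomputable section

def ff : Fin 3 → ℝ × ℝ → ℝ :=
  ![fun x => x.2, fun x => x.1 + x.2 ^ 2, fun x => -x.1 - x.1 * |x.1| + x.2 ^ 2]

lemma lt_div_of_mul_lt_one_of_le_sq {M a d : ℝ} (ha : 0 < a) (hMa : M * a < 1) (hd : 0 < d)
    (hda : d ≤ a ^ 2) : M < a / d := by
  rw [lt_div_iff₀ hd]
  nlinarith

theorem exists_tradeoff_gt_of_quadratic_rise {ι α : Type*} (f : ι → α → ℝ) (i : ι) (x₀ : α)
    (γ : ℝ → α) (h_drop : ∀ a > 0, f i (γ a) = f i x₀ - a)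
    (h_rise : ∀ a > 0, ∀ j, f j (γ a) - f j x₀ ≤ a ^ 2) :
    ∀ M > 0, ∃ x, f i x < f i x₀ ∧
      ∀ j, f j x₀ < f j x → M < (f i x₀ - f i x) / (f j x - f j x₀) := by
  intro M hM
  obtain ⟨a, ha, hMa⟩ : ∃ a : ℝ, 0 < a ∧ M * a < 1 :=
    ⟨(2 * M)⁻¹, by positivity, by field_simp; norm_num⟩
  refine ⟨γ a, by linarith [h_drop a ha], fun j hj => ?_⟩
  rw [h_drop a ha, sub_sub_cancel]
  exact lt_div_of_mul_lt_one_of_le_sq ha hMa (sub_pos.mpr hj) (h_rise a ha j)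

lemma ff_apply_zero (j : Fin 3) : ff j (0, 0) = 0 := by
  fin_cases j <;> simp [ff]

lemma ff_apply_neg_axis {a : ℝ} (ha : 0 < a) (j : Fin 3) : ff j (0, -a) ≤ a ^ 2 := by
  fin_cases j <;> simp [ff]
  nlinarith

/-- Example 4.2: `x⁰ = (0,0)` is not a Geoffrion properly efficient solution of the
problem of minimizing `f = (f₁, f₂, f₃)` over `ℝ²`. -/
theorem stmt_13 :
    ∀ M : ℝ, 0 < M → ∃ x : ℝ × ℝ, ff 0 x < ff 0 (0, 0) ∧
      ∀ j : Fin 3, ff j (0, 0) < ff j x →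
        M < (ff 0 (0, 0) - ff 0 x) / (ff j x - ff j (0, 0)) :=
  exists_tradeoff_gt_of_quadratic_rise ff 0 (0, 0) (fun a => (0, -a))
    (fun a _ => by simp [ff])
    (fun a ha j => by simpa [ff_apply_zero] using ff_apply_neg_axis ha j)
end
end

section
/- Consider the function h(s) := 4 + sin(ln|s|) + 3 cos(ln|s|) for s ∈ ℝ \ {0}. Then liminf_{s → 0, s ≠ 0} h(s) = 4 − √10 and limsup_{s → 0, s ≠ 0} h(s) = 4 + √10. -/
/-! `sin t + 3 cos t` ranges exactly over `[-√10, √10]`, and as `s → 0` the value `log |s|`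
returns infinitely often to every residue class modulo `2π`, so both extremes of `h` are attained
frequently near `0`. -/

open Filter Topology

namespace Filter

variable {ι α : Type*} [ConditionallyCompleteLinearOrder α] {l : Filter ι} {u : ι → α} {a : α}

theorem limsup_eq_of_forall_le_of_frequently_eq (hle : ∀ i, u i ≤ a)
    (hfreq : ∃ᶠ i in l, u i = a) : limsup u l = a :=
  le_antisymm
    (limsup_le_of_le (IsCoboundedUnder.of_frequently_ge (hfreq.mono fun _ h ↦ h.ge))
      (Eventually.of_forall hle))
    (le_limsup_of_frequently_le (hfreq.mono fun _ h ↦ h.ge)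
      ⟨a, eventually_map.mpr (Eventually.of_forall hle)⟩)

theorem liminf_eq_of_forall_ge_of_frequently_eq (hge : ∀ i, a ≤ u i)
    (hfreq : ∃ᶠ i in l, u i = a) : liminf u l = a :=
  limsup_eq_of_forall_le_of_frequently_eq (α := αᵒᵈ) hge hfreq

end Filter

namespace Real

theorem abs_mul_sin_add_mul_cos_le (a b x : ℝ) : |a * sin x + b * cos x| ≤ √(a ^ 2 + b ^ 2) :=
  abs_le_sqrt <| by
    nlinarith [sin_sq_add_cos_sq x, sq_nonneg (a * cos x - b * sin x)]

theorem exists_mul_sin_add_mul_cos_eq_sqrt (a b : ℝ) :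
    ∃ x, a * sin x + b * cos x = √(a ^ 2 + b ^ 2) := by
  rcases eq_or_ne (⟨b, a⟩ : ℂ) 0 with hz | hz
  · obtain ⟨rfl, rfl⟩ : b = 0 ∧ a = 0 := by simpa [Complex.ext_iff] using hz
    exact ⟨0, by simp⟩
  -- the argument of `b + a i` has cosine `b / r` and sine `a / r`, with `r = √(a² + b²)`
  refine ⟨Complex.arg ⟨b, a⟩, ?_⟩
  have hnorm : ‖(⟨b, a⟩ : ℂ)‖ = √(a ^ 2 + b ^ 2) := by
    rw [Complex.norm_eq_sqrt_sq_add_sq, add_comm]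
  have hr : √(a ^ 2 + b ^ 2) ≠ 0 := hnorm ▸ norm_ne_zero_iff.mpr hz
  rw [Complex.sin_arg, Complex.cos_arg hz, hnorm]
  field_simp
  rw [sq_sqrt (by positivity)]

theorem frequently_comp_log_abs_eq {g : ℝ → ℝ} {c : ℝ} (hg : Function.Periodic g c) (hc : 0 < c)
    (x : ℝ) : ∃ᶠ s in 𝓝[≠] (0 : ℝ), g (log |s|) = g x := by
  -- along `s n = exp (x - n c) → 0⁺` the value `log |s n| = x - n c` stays in the class of `x`
  have hlog : Tendsto (fun n : ℕ ↦ x - n * c) atTop atBot :=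
    tendsto_atBot_add_const_left _ x
      (tendsto_neg_atTop_atBot.comp (tendsto_natCast_atTop_atTop.atTop_mul_const hc))
  have hs : Tendsto (fun n : ℕ ↦ Real.exp (x - n * c)) atTop (𝓝[≠] (0 : ℝ)) :=
    (tendsto_exp_atBot_nhdsGT.mono_right (nhdsWithin_mono _ fun _ h ↦ ne_of_gt h)).comp hlog
  refine hs.frequently (Frequently.of_forall fun n ↦ ?_)
  rw [abs_of_pos (exp_pos _), log_exp, hg.sub_nat_mul_eq]

end Real

open Real

/-- The extreme limiting values of `h(s) = 4 + sin(ln|s|) + 3 cos(ln|s|)` as `s → 0`,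
`s ≠ 0`. -/
theorem stmt_15 :
    Filter.liminf
        (fun s : ℝ => 4 + Real.sin (Real.log |s|) + 3 * Real.cos (Real.log |s|))
        (𝓝[≠] (0 : ℝ)) = 4 - Real.sqrt 10 ∧
    Filter.limsup
        (fun s : ℝ => 4 + Real.sin (Real.log |s|) + 3 * Real.cos (Real.log |s|))
        (𝓝[≠] (0 : ℝ)) = 4 + Real.sqrt 10 := by
  set g : ℝ → ℝ := fun x ↦ 4 + sin x + 3 * cos x
  have hg : Function.Periodic g (2 * π) := fun x ↦ by simp only [g, sin_add_two_pi, cos_add_two_pi]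
  have hbound (x : ℝ) : |sin x + 3 * cos x| ≤ √10 := by
    simpa [show (1 : ℝ) + 3 ^ 2 = 10 by norm_num] using abs_mul_sin_add_mul_cos_le 1 3 x
  obtain ⟨x₀, hx₀⟩ : ∃ x, sin x + 3 * cos x = √10 := by
    simpa [show (1 : ℝ) + 3 ^ 2 = 10 by norm_num] using exists_mul_sin_add_mul_cos_eq_sqrt 1 3
  constructor
  · refine liminf_eq_of_forall_ge_of_frequently_eq (fun s ↦ ?_) ?_
    · linarith [(abs_le.mp (hbound (log |s|))).1]
    · refine (frequently_comp_log_abs_eq hg two_pi_pos (x₀ + π)).mono fun s hs ↦ ?_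
      simp only [g, sin_add_pi, cos_add_pi] at hs ⊢
      linarith
  · refine limsup_eq_of_forall_le_of_frequently_eq (fun s ↦ ?_) ?_
    · linarith [(abs_le.mp (hbound (log |s|))).2]
    · refine (frequently_comp_log_abs_eq hg two_pi_pos x₀).mono fun s hs ↦ ?_
      simp only [g] at hs ⊢
      linarith
end

section
/- Define f₁ : ℝ² → ℝ by f₁(x) := 2x₁² + x₂² + x₂ + x₁² sin(ln|x₁|) if x₁ ≠ 0, and f₁(x) := x₂² + x₂ if x₁ = 0, and set f₂ := −f₁ (both are C^{1,1}). Let x⁰ := (0,0) and u := (1,0). Then f₁°°(x⁰; u, u) = 4 + √10 and f₂°°(x⁰; u, u) = −4 + √10. -/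
open Filter Topology Set
open scoped InnerProductSpace

noncomputable section

/-- The `C^{1,1}` function `f₁` of Example 4.1. -/
def f1 (x : EuclideanSpace ℝ (Fin 2)) : ℝ :=
  if x 0 = 0 then (x 1) ^ 2 + x 1
  else 2 * (x 0) ^ 2 + (x 1) ^ 2 + x 1 + (x 0) ^ 2 * Real.sin (Real.log |x 0|)

/-- `f₂ = −f₁`. -/
def f2 (x : EuclideanSpace ℝ (Fin 2)) : ℝ := -f1 x


/-! Along `u = e₁` the gradient of `f₁` only sees `osc' s = s (4 + 2 sin ln|s| + cos ln|s|)`, the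
derivative of `osc s = s² (2 + sin ln|s|)`. Off `0` the derivative of `osc'` is
`4 + sin ln|s| + 3 cos ln|s| = 4 + √10 sin (ln|s| + arctan 3)`, which ranges over
`[4 - √10, 4 + √10]` and attains both ends at points accumulating at `0`. Hence the difference
quotients of `osc'` are bounded by `4 + √10` and come arbitrarily close to it near those points; for
`f₂` the roles of the two ends are swapped. -/

open Real

theorem sub_le_mul_sub_of_hasDerivAt_le_of_ne {f f' : ℝ → ℝ} {c C : ℝ} (hf : Continuous f)
    (hd : ∀ x ≠ c, HasDerivAt f (f' x) x) (hle : ∀ x ≠ c, f' x ≤ C) ⦃x y : ℝ⦄ (hxy : x ≤ y) :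
    f y - f x ≤ C * (y - x) := by
  have hmonoOn : ∀ D : Set ℝ, Convex ℝ D → c ∉ interior D →
      MonotoneOn (fun t => C * t - f t) D := by
    intro D hD hc
    refine monotoneOn_of_hasDerivWithinAt_nonneg hD (by fun_prop) (f' := fun t => C - f' t)
      (fun t ht => ?_) (fun t ht => ?_)
    · have hd' := hd t (ne_of_mem_of_not_mem ht hc)
      exact (((hasDerivAt_id t).const_mul C).sub hd').hasDerivWithinAt.congr_deriv (by simp)
    · linarith [hle t (ne_of_mem_of_not_mem ht hc)]
  have hmono : Monotone fun t => C * t - f t :=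
    (hmonoOn _ (convex_Iic c) (by simp)).Iic_union_Ici (hmonoOn _ (convex_Ici c) (by simp))
  linarith [hmono hxy]

theorem limsup_slope_eq {f : ℝ → ℝ} {a C : ℝ} (hle : ∀ ⦃x y⦄, x ≤ y → f y - f x ≤ C * (y - x))
    (hderiv : ∃ᶠ s in 𝓝 a, HasDerivAt f C s) :
    limsup (fun p : ℝ × ℝ => (f (p.1 + p.2) - f p.1) / p.2) (𝓝 a ×ˢ 𝓝[>] 0) = C := by
  set q := fun p : ℝ × ℝ => (f (p.1 + p.2) - f p.1) / p.2
  have hfreq : ∀ b < C, ∃ᶠ p in 𝓝 a ×ˢ 𝓝[>] 0, b ≤ q p := fun b hb =>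
    (Frequently.uncurry <| hderiv.mono fun s hs =>
      (hs.tendsto_slope_zero_right.eventually (eventually_ge_nhds hb)).frequently).mono
        fun p hp => by simpa [q, div_eq_inv_mul] using hp
  have hub : ∀ᶠ p in 𝓝 a ×ˢ 𝓝[>] 0, q p ≤ C :=
    (eventually_mem_nhdsWithin.prod_inr _).mono fun p (hp : 0 < p.2) =>
      (div_le_iff₀ hp).2 (by simpa using hle (le_add_of_nonneg_right hp.le))
  refine le_antisymm (limsup_le_of_le ?_ hub) (le_of_forall_lt_imp_le_of_dense fun b hb => ?_)
  · exact IsCoboundedUnder.of_frequently_ge (hfreq _ (sub_one_lt C))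
  · exact le_limsup_of_frequently_le (hfreq b hb) ⟨C, hub⟩

theorem secondDD_eq_limsup_slope {n : ℕ} {φ : EuclideanSpace ℝ (Fin n) → ℝ}
    {x0 u : EuclideanSpace ℝ (Fin n)} {i : Fin n} {h : ℝ → ℝ}
    (hgrad : ∀ x, ⟪gradient φ x, u⟫_ℝ = h (x i)) (hu : u i = 1) :
    secondDD φ x0 u =
      limsup (fun p : ℝ × ℝ => (h (p.1 + p.2) - h p.1) / p.2) (𝓝 (x0 i) ×ˢ 𝓝[>] 0) := by
  have hsurj : Function.Surjective (EuclideanSpace.proj i : EuclideanSpace ℝ (Fin n) →L[ℝ] ℝ) :=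
    fun r => ⟨EuclideanSpace.single i r, by simp⟩
  have hproj : map (fun x : EuclideanSpace ℝ (Fin n) => x i) (𝓝 x0) = 𝓝 (x0 i) :=
    (ContinuousLinearMap.isOpenMap _ hsurj).map_nhds_eq
      (ContinuousLinearMap.continuous _).continuousAt
  rw [secondDD, ← hproj, ← map_id (f := 𝓝[>] (0 : ℝ)), prod_map_map_eq, ← limsup_comp]
  simp [Function.comp_def, hgrad, hu]

theorem abs_sin_add_three_mul_cos_le (θ : ℝ) : |sin θ + 3 * cos θ| ≤ √10 :=
  abs_le_sqrt <| by nlinarith [sin_sq_add_cos_sq θ, sq_nonneg (3 * sin θ - cos θ)]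

theorem sin_add_three_mul_cos_arctan : sin (arctan (1 / 3)) + 3 * cos (arctan (1 / 3)) = √10 := by
  have h10 : √(1 + (1 / 3 : ℝ) ^ 2) = √10 / 3 := by
    rw [show (1 + (1 / 3 : ℝ) ^ 2) = 10 / 3 ^ 2 by norm_num, sqrt_div' _ (by norm_num),
      sqrt_sq (by norm_num)]
  rw [sin_arctan, cos_arctan, h10]
  field_simp
  nlinarith [sq_sqrt (show (0 : ℝ) ≤ 10 by norm_num)]

-- `Real.log` is even, so `log s` here is the paper's `ln|s|`.
def osc (s : ℝ) : ℝ := s ^ 2 * (2 + sin (log s))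

def osc' (s : ℝ) : ℝ := s * (4 + 2 * sin (log s) + cos (log s))

theorem tendsto_mul_nhds_zero_of_abs_le {B : ℝ → ℝ} {M : ℝ} (hB : ∀ t, |B t| ≤ M) :
    Tendsto (fun t => t * B t) (𝓝 0) (𝓝 0) :=
  tendsto_id.zero_mul_isBoundedUnder_le (isBoundedUnder_of ⟨M, fun t => hB t⟩)

theorem hasDerivAt_osc (s : ℝ) : HasDerivAt osc (osc' s) s := by
  rcases eq_or_ne s 0 with rfl | hs
  · rw [hasDerivAt_iff_tendsto_slope_zero, show osc' 0 = 0 by simp [osc']]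
    refine (tendsto_mul_nhds_zero_of_abs_le (B := fun t => 2 + sin (log t)) (M := 3) fun t => ?_)
      |>.mono_left nhdsWithin_le_nhds
      |>.congr' (eventually_nhdsWithin_of_forall fun t (ht : t ≠ 0) => ?_)
    · rw [abs_le]; constructor <;> linarith [neg_one_le_sin (log t), sin_le_one (log t)]
    · simp only [osc, zero_add, smul_eq_mul]
      field_simp
      ring
  · have hlog := hasDerivAt_log hs
    refine ((hasDerivAt_pow 2 s).mul (((hasDerivAt_sin _).comp s hlog).const_add 2)).congr_deriv ?_
    simp only [osc', Function.comp_apply]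
    field_simp
    ring

theorem hasDerivAt_osc' {s : ℝ} (hs : s ≠ 0) :
    HasDerivAt osc' (4 + sin (log s) + 3 * cos (log s)) s := by
  have hlog := hasDerivAt_log hs
  refine ((hasDerivAt_id s).mul ((((hasDerivAt_sin _).comp s hlog).const_mul 2).const_add 4
    |>.add ((hasDerivAt_cos _).comp s hlog))).congr_deriv ?_
  simp only [id, Function.comp_apply, Pi.add_apply]
  field_simp
  ring

theorem continuous_osc' : Continuous osc' := by
  refine continuous_iff_continuousAt.2 fun s => ?_
  rcases eq_or_ne s 0 with rfl | hs
  · rw [ContinuousAt, show osc' 0 = 0 by simp [osc']]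
    refine tendsto_mul_nhds_zero_of_abs_le (M := 7) fun t => ?_
    rw [abs_le]; constructor <;> linarith [neg_one_le_sin (log t), sin_le_one (log t),
      neg_one_le_cos (log t), cos_le_one (log t)]
  · exact (hasDerivAt_osc' hs).continuousAt

theorem frequently_hasDerivAt_osc' (θ : ℝ) :
    ∃ᶠ s in 𝓝 0, HasDerivAt osc' (4 + sin θ + 3 * cos θ) s := by
  have hlim : Tendsto (fun k : ℕ => exp (θ - k * (2 * π))) atTop (𝓝 0) :=
    tendsto_exp_atBot.comp <| tendsto_atBot_add_const_left _ _ <|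
      tendsto_neg_atTop_atBot.comp <| tendsto_natCast_atTop_atTop.atTop_mul_const (by positivity)
  refine hlim.frequently (Eventually.frequently (Eventually.of_forall fun k => ?_))
  have hlog : log (exp (θ - k * (2 * π))) = θ + (-k : ℤ) * (2 * π) := by
    rw [log_exp]; push_cast; ring
  have hderiv := hasDerivAt_osc' (exp_pos (θ - k * (2 * π))).ne'
  rwa [hlog, sin_add_int_mul_two_pi, cos_add_int_mul_two_pi] at hderiv

theorem osc'_sub_le ⦃x y : ℝ⦄ (hxy : x ≤ y) : osc' y - osc' x ≤ (4 + √10) * (y - x) :=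
  sub_le_mul_sub_of_hasDerivAt_le_of_ne continuous_osc' (fun _ => hasDerivAt_osc')
    (fun s _ => by linarith [le_abs_self (sin (log s) + 3 * cos (log s)),
      abs_sin_add_three_mul_cos_le (log s)]) hxy

theorem neg_osc'_sub_le ⦃x y : ℝ⦄ (hxy : x ≤ y) :
    -osc' y - -osc' x ≤ (-4 + √10) * (y - x) :=
  sub_le_mul_sub_of_hasDerivAt_le_of_ne continuous_osc'.neg (fun _ hs => (hasDerivAt_osc' hs).neg)
    (fun s _ => by linarith [neg_abs_le (sin (log s) + 3 * cos (log s)),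
      abs_sin_add_three_mul_cos_le (log s)]) hxy

theorem f1_eq (x : EuclideanSpace ℝ (Fin 2)) : f1 x = osc (x 0) + (x 1 ^ 2 + x 1) := by
  rw [f1, osc]
  split_ifs with h
  · simp [h]
  · rw [log_abs]; ring

theorem inner_gradient_f1 (x u : EuclideanSpace ℝ (Fin 2)) :
    ⟪gradient f1 x, u⟫_ℝ = osc' (x 0) * u 0 + (2 * x 1 + 1) * u 1 := by
  have hquad (a : ℝ) : HasDerivAt (fun t : ℝ => t ^ 2 + t) (2 * a + 1) a :=
    ((hasDerivAt_pow 2 a).add (hasDerivAt_id' a)).congr_deriv (by ring)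
  have hf1 : HasFDerivAt f1 (osc' (x 0) • EuclideanSpace.proj (𝕜 := ℝ) (0 : Fin 2)
      + (2 * x 1 + 1) • EuclideanSpace.proj (𝕜 := ℝ) (1 : Fin 2)) x := by
    rw [funext f1_eq]
    exact ((hasDerivAt_osc _).comp_hasFDerivAt x (EuclideanSpace.proj (𝕜 := ℝ) _).hasFDerivAt).add
      ((hquad _).comp_hasFDerivAt x (EuclideanSpace.proj (𝕜 := ℝ) _).hasFDerivAt)
  rw [inner_gradient_left, hf1.fderiv]
  simp

theorem inner_gradient_f2 (x u : EuclideanSpace ℝ (Fin 2)) :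
    ⟪gradient f2 x, u⟫_ℝ = -⟪gradient f1 x, u⟫_ℝ := by
  rw [inner_gradient_left, inner_gradient_left, show f2 = fun x => -f1 x from rfl, fderiv_fun_neg]
  rfl

/-- Example 4.1: the values of `f₁°°(x⁰; u, u)` and `f₂°°(x⁰; u, u)` at `x⁰ = (0,0)`
in the direction `u = (1,0)`. -/
theorem stmt_16 :
    secondDD f1 (0 : EuclideanSpace ℝ (Fin 2))
        ((WithLp.equiv 2 (Fin 2 → ℝ)).symm ![1, 0]) = 4 + Real.sqrt 10 ∧
    secondDD f2 (0 : EuclideanSpace ℝ (Fin 2))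
        ((WithLp.equiv 2 (Fin 2 → ℝ)).symm ![1, 0]) = -4 + Real.sqrt 10 := by
  constructor
  · rw [secondDD_eq_limsup_slope (i := 0) (h := osc')
      (fun x => by rw [inner_gradient_f1]; simp) rfl]
    have hfreq := frequently_hasDerivAt_osc' (arctan (1 / 3))
    rw [add_assoc, sin_add_three_mul_cos_arctan] at hfreq
    exact limsup_slope_eq osc'_sub_le hfreq
  · rw [secondDD_eq_limsup_slope (i := 0) (h := -osc')
      (fun x => by rw [inner_gradient_f2, inner_gradient_f1]; simp) rfl]
    refine limsup_slope_eq neg_osc'_sub_le ((frequently_hasDerivAt_osc' (arctan (1 / 3) + π)).mono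
      fun s hs => ?_)
    refine hs.neg.congr_deriv ?_
    linarith [sin_add_pi (arctan (1 / 3)), cos_add_pi (arctan (1 / 3)),
      sin_add_three_mul_cos_arctan]
end
end
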